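/- Let η1 < η2 < η3 < η4 be real numbers. For m ≥ 1 define K_m(x) = J_m(x, η1, η2) + J_m(x, η3, η4). Then K_m converges uniformly in x ∈ ℝ, as m → ∞, to J_b(x, η1, η2) + J_b(x, η3, η4). -/

import Mathlib

open MeasureTheory Filter

/-- `J_m(x, η1, η2) = κ · Σ_{j=1}^{m} ∫_{A^m_{3j}(η1,η2)} W(x − y) dy`, where
`A^m_i(η1,η2) = [η1 + (i−1)(η2−η1)/(3m), η1 + i(η2−η1)/(3m))`. -/
noncomputable def Jm (W : ℝ → ℝ) (κ η1 η2 : ℝ) (m : ℕ) (x : ℝ) : ℝ :=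
  κ * ∑ j ∈ Finset.range m,
    ∫ y in (η1 + (3 * (j : ℝ) + 2) * (η2 - η1) / (3 * (m : ℝ)))..(
            η1 + (3 * (j : ℝ) + 3) * (η2 - η1) / (3 * (m : ℝ))), W (x - y)

/-- The limiting mesoscopic bump profile `J_b(x, η1, η2) = (κ/3) ∫_{η1}^{η2} W(x−y) dy`. -/
noncomputable def Jb (W : ℝ → ℝ) (κ η1 η2 : ℝ) (x : ℝ) : ℝ :=
  (κ / 3) * ∫ y in η1..η2, W (x - y)

/-!
A continuous periodic function is uniformly continuous, so there is `δ > 0` such that the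
oscillation of `y ↦ W (x - y)` on scales `≤ δ` is at most `ε`, uniformly in `x`. Cut `[η1, η2]`
into `m` cells of length `ℓ = |η2 - η1| / m ≤ δ`. On a cell `[u, v]`, both a third of the integral
over the cell and the integral over its last third differ from `(v - u) / 3 · W (x - v)` by at most
`ε ℓ / 3`. Summing over the cells gives `|J_b - J_m| ≤ 2 |κ| ε |η2 - η1| / 3` for every `x`.
-/

theorem Function.Periodic.uniformContinuous_of_continuous {α : Type*} [UniformSpace α]
    {f : ℝ → α} {c : ℝ} (hc : 0 < c) (hp : Function.Periodic f c) (hf : Continuous f) :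
    UniformContinuous f := by
  have : Fact (0 < c) := ⟨hc⟩
  have hlift : Continuous (hp.lift : AddCircle c → α) := continuous_quot_lift _ hf
  exact (CompactSpace.uniformContinuous_of_continuous hlift).comp
    (uniformContinuous_addMonoidHom_of_continuous (f := QuotientAddGroup.mk' _)
      continuous_quotient_mk')

theorem abs_intervalIntegral_sub_mul_le {f : ℝ → ℝ} {u v c ε : ℝ}
    (hf : IntervalIntegrable f volume u v) (h : ∀ y ∈ Set.uIoc u v, |f y - c| ≤ ε) :
    |(∫ y in u..v, f y) - (v - u) * c| ≤ ε * |v - u| := by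
  have hsub : ∫ y in u..v, (f y - c) = (∫ y in u..v, f y) - (v - u) * c := by
    rw [intervalIntegral.integral_sub hf intervalIntegrable_const, intervalIntegral.integral_const,
      smul_eq_mul]
  rw [← hsub]
  exact intervalIntegral.norm_integral_le_of_norm_le_const (f := fun y => f y - c) h

theorem abs_intervalIntegral_div_three_sub_last_third_le {f : ℝ → ℝ} (hf : Continuous f)
    {u w v ε : ℝ} (hw : 3 * (v - w) = v - u) (h : ∀ y ∈ Set.uIcc u v, |f y - f v| ≤ ε) :
    |(∫ y in u..v, f y) / 3 - ∫ y in w..v, f y| ≤ 2 * ε * |v - u| / 3 := by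
  have hw_mem : w ∈ Set.uIcc u v := by
    rw [Set.mem_uIcc]
    rcases le_total u v with huv | hvu
    · exact Or.inl ⟨by linarith, by linarith⟩
    · exact Or.inr ⟨by linarith, by linarith⟩
  have hwhole := abs_intervalIntegral_sub_mul_le (hf.intervalIntegrable u v)
    (fun y hy => h y (Set.uIoc_subset_uIcc hy))
  have hthird := abs_intervalIntegral_sub_mul_le (hf.intervalIntegrable w v)
    (fun y hy => h y (Set.uIcc_subset_uIcc hw_mem Set.right_mem_uIcc (Set.uIoc_subset_uIcc hy)))
  have hvw : |v - w| = |v - u| / 3 := by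
    rw [show v - w = (v - u) / 3 by linarith, abs_div, abs_of_pos (by norm_num : (0:ℝ) < 3)]
  rw [hvw] at hthird
  calc |(∫ y in u..v, f y) / 3 - ∫ y in w..v, f y|
      = |((∫ y in u..v, f y) - (v - u) * f v) / 3 - ((∫ y in w..v, f y) - (v - w) * f v)| := by
        congr 1; linear_combination -(f v / 3) * hw
    _ ≤ |(∫ y in u..v, f y) - (v - u) * f v| / 3 + |(∫ y in w..v, f y) - (v - w) * f v| := by
        refine (abs_sub _ _).trans_eq ?_
        rw [abs_div, abs_of_pos (by norm_num : (0:ℝ) < 3)]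
    _ ≤ 2 * ε * |v - u| / 3 := by linarith

noncomputable def sumIntegralLastThirds (f : ℝ → ℝ) (a b : ℝ) (m : ℕ) : ℝ :=
  ∑ j ∈ Finset.range m,
    ∫ y in (a + (3 * (j : ℝ) + 2) * (b - a) / (3 * m))..
      (a + (3 * (j : ℝ) + 3) * (b - a) / (3 * m)), f y

theorem abs_intervalIntegral_div_three_sub_sumIntegralLastThirds_le {f : ℝ → ℝ} (hf : Continuous f)
    {a b ε : ℝ} {m : ℕ} (hm : m ≠ 0)
    (h : ∀ s t, |s - t| ≤ |b - a| / m → |f s - f t| ≤ ε) :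
    |(∫ y in a..b, f y) / 3 - sumIntegralLastThirds f a b m| ≤ 2 * ε * |b - a| / 3 := by
  have hm' : (m : ℝ) ≠ 0 := Nat.cast_ne_zero.mpr hm
  obtain ⟨t, ht⟩ : ∃ t : ℕ → ℝ, ∀ k, t k = a + 3 * (k : ℝ) * (b - a) / (3 * m) :=
    ⟨_, fun _ => rfl⟩
  have ht_succ (j : ℕ) : t (j + 1) = a + (3 * (j : ℝ) + 3) * (b - a) / (3 * m) := by
    rw [ht]; push_cast; ring
  have ht_step (j : ℕ) : t (j + 1) - t j = (b - a) / m := by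
    rw [ht_succ, ht]
    field_simp
    ring
  have hsplit : ∫ y in a..b, f y = ∑ j ∈ Finset.range m, ∫ y in t j..t (j + 1), f y := by
    rw [intervalIntegral.sum_integral_adjacent_intervals fun k _ => hf.intervalIntegrable _ _]
    congr 1
    · rw [ht]; simp
    · rw [ht]; field_simp; ring
  have hpiece (j : ℕ) :
      |(∫ y in t j..t (j + 1), f y) / 3 -
          ∫ y in (a + (3 * (j : ℝ) + 2) * (b - a) / (3 * m))..t (j + 1), f y| ≤
        2 * ε * (|b - a| / m) / 3 := by
    have hstep : |t (j + 1) - t j| = |b - a| / m := by rw [ht_step, abs_div, Nat.abs_cast]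
    rw [← hstep]
    refine abs_intervalIntegral_div_three_sub_last_third_le hf ?_ fun y hy => h _ _ ?_
    · rw [ht_succ, ht]; field_simp; ring
    · rw [← hstep, abs_sub_comm]; exact Set.abs_sub_right_of_mem_uIcc hy
  calc _ = |∑ j ∈ Finset.range m, ((∫ y in t j..t (j + 1), f y) / 3 -
          ∫ y in (a + (3 * (j : ℝ) + 2) * (b - a) / (3 * m))..t (j + 1), f y)| := by
        simp only [sumIntegralLastThirds, hsplit, Finset.sum_div, Finset.sum_sub_distrib, ht_succ]
    _ ≤ ∑ _j ∈ Finset.range m, 2 * ε * (|b - a| / m) / 3 :=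
        (Finset.abs_sum_le_sum_abs _ _).trans (Finset.sum_le_sum fun j _ => hpiece j)
    _ = 2 * ε * |b - a| / 3 := by
        rw [Finset.sum_const, Finset.card_range, nsmul_eq_mul]; field_simp

theorem tendstoUniformly_Jm_Jb {W : ℝ → ℝ} (hW : UniformContinuous W) (κ a b : ℝ) :
    TendstoUniformly (Jm W κ a b) (Jb W κ a b) atTop := by
  rw [Metric.tendstoUniformly_iff]
  intro ε hε
  set ε' := ε / (|κ| * |b - a| + 1)
  have hε'_pos : 0 < ε' := by positivity
  obtain ⟨δ, hδ, hWδ⟩ := Metric.uniformContinuous_iff_le.mp hW ε' hε'_pos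
  filter_upwards [eventually_ne_atTop 0,
    (tendsto_const_div_atTop_nhds_zero_nat |b - a|).eventually (eventually_le_nhds hδ)]
    with m hm hmδ x
  have hdiff := abs_intervalIntegral_div_three_sub_sumIntegralLastThirds_le
    (hW.continuous.comp (continuous_sub_left x)) hm (ε := ε')
    fun s t hst => hWδ <| by
      rw [Real.dist_eq, sub_sub_sub_cancel_left, abs_sub_comm]; exact hst.trans hmδ
  calc dist (Jb W κ a b x) (Jm W κ a b m x)
      = |κ| * |(∫ y in a..b, W (x - y)) / 3 -
          sumIntegralLastThirds (fun y => W (x - y)) a b m| := by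
        rw [Real.dist_eq, Jb, Jm, sumIntegralLastThirds, ← abs_mul]; congr 1; ring
    _ ≤ |κ| * (2 * ε' * |b - a| / 3) := by gcongr; exact hdiff
    _ < ε := by
        have hε'_mul : ε' * (|κ| * |b - a| + 1) = ε := div_mul_cancel₀ _ (by positivity)
        nlinarith [mul_nonneg (mul_nonneg (abs_nonneg κ) (abs_nonneg (b - a))) hε'_pos.le]

theorem twoBump_tendstoUniformly_general
    (L : ℝ) (hL : 0 < L) (W : ℝ → ℝ) (hWcont : Continuous W)
    (hWper : Function.Periodic W (2 * L)) (κ : ℝ)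
    (η1 η2 η3 η4 : ℝ) :
    TendstoUniformly
      (fun m x => Jm W κ η1 η2 m x + Jm W κ η3 η4 m x)
      (fun x => Jb W κ η1 η2 x + Jb W κ η3 η4 x) atTop := by
  have hW : UniformContinuous W := hWper.uniformContinuous_of_continuous (by positivity) hWcont
  exact (tendstoUniformly_Jm_Jb hW κ η1 η2).add (tendstoUniformly_Jm_Jb hW κ η3 η4)

/-- For the two-bump configuration, `K_m = J_m(·,η1,η2) + J_m(·,η3,η4)` converges
uniformly in `x ∈ ℝ`, as `m → ∞`, to `J_b(·,η1,η2) + J_b(·,η3,η4)`. -/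
theorem twoBump_tendstoUniformly
    (L : ℝ) (hL : 0 < L) (W : ℝ → ℝ) (hWcont : Continuous W)
    (hWper : Function.Periodic W (2 * L)) (κ : ℝ) (hκ : 0 < κ)
    (η1 η2 η3 η4 : ℝ) (h12 : η1 < η2) (h23 : η2 < η3) (h34 : η3 < η4) :
    TendstoUniformly
      (fun m x => Jm W κ η1 η2 m x + Jm W κ η3 η4 m x)
      (fun x => Jb W κ η1 η2 x + Jb W κ η3 η4 x) atTop :=
  twoBump_tendstoUniformly_general L hL W hWcont hWper κ η1 η2 η3 η4
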